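/- arXiv:2201.00550 — 7 statements merged into one kernel-verified Lean document; each statement's English description precedes it below -/
import Mathlib

section
/- Let ε₁, ε₂, ε₃ be roots of unity in ℂ with ε₁ + ε₂ + ε₃ = 0. Then there exists a root of unity δ and a labelling such that εᵢ = δ·ζ₃ⁱ for i = 1,2,3, where ζ₃ = e^{2πi/3}. -/
set_option maxHeartbeats 1000000 in
theorem three_roots_of_unity_sum_zero (ε : Fin 3 → ℂ)
    (h : ∀ i, ∃ m : ℕ, 0 < m ∧ ε i ^ m = 1) (hsum : ∑ i, ε i = 0) :
    ∃ (δ : ℂ), (∃ m : ℕ, 0 < m ∧ δ ^ m = 1) ∧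
      ∃ σ : Equiv.Perm (Fin 3), ∀ i : Fin 3,
        ε (σ i) = δ * Complex.exp (2 * Real.pi * Complex.I / 3) ^ ((i : ℕ) + 1) := by
  set ζ : ℂ := Complex.exp (2 * Real.pi * Complex.I / 3) with hζdef
  have hζ3 : ζ ^ 3 = 1 := by
    rw [hζdef, ← Complex.exp_nat_mul]
    rw [show (3 : ℕ) * (2 * (Real.pi : ℂ) * Complex.I / 3) = 2 * Real.pi * Complex.I by
      push_cast; ring]
    exact Complex.exp_two_pi_mul_I
  have hθ : ζ = Complex.exp (((2 * Real.pi / 3 : ℝ) : ℂ) * Complex.I) := by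
    rw [hζdef]; push_cast; ring_nf
  have hre : ζ.re = Real.cos (2 * Real.pi / 3) := by
    rw [hθ, Complex.exp_ofReal_mul_I_re]
  have him : ζ.im = Real.sin (2 * Real.pi / 3) := by
    rw [hθ, Complex.exp_ofReal_mul_I_im]
  have hcos : Real.cos (2 * Real.pi / 3) = -(1 / 2) := by
    rw [show (2 * Real.pi / 3) = Real.pi - Real.pi / 3 by ring,
      Real.cos_pi_sub, Real.cos_pi_div_three]
  have hsin : Real.sin (2 * Real.pi / 3) = Real.sqrt 3 / 2 := by
    rw [show (2 * Real.pi / 3) = Real.pi - Real.pi / 3 by ring,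
      Real.sin_pi_sub, Real.sin_pi_div_three]
  have hsqrt3 : Real.sqrt 3 ^ 2 = 3 := Real.sq_sqrt (by norm_num)
  have hsqrt3pos : 0 < Real.sqrt 3 := Real.sqrt_pos.mpr (by norm_num)
  have hζne1 : ζ ≠ 1 := by
    intro hh
    have : ζ.im = 0 := by rw [hh]; simp
    rw [him, hsin] at this
    nlinarith
  have hζ2 : ζ ^ 2 + ζ + 1 = 0 := by
    have : (ζ - 1) * (ζ ^ 2 + ζ + 1) = 0 := by
      have : (ζ - 1) * (ζ ^ 2 + ζ + 1) = ζ ^ 3 - 1 := by ring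
      rw [this, hζ3, sub_self]
    rcases mul_eq_zero.mp this with h1 | h2
    · exact absurd (sub_eq_zero.mp h1) hζne1
    · exact h2
  -- abs of each ε i is 1
  have habs : ∀ i, ‖ε i‖ = 1 := by
    intro i
    obtain ⟨m, hm, he⟩ := h i
    have hp : ‖ε i‖ ^ m = 1 := by
      rw [← norm_pow, he, norm_one]
    have h0 : (0 : ℝ) ≤ ‖ε i‖ := (norm_nonneg _)
    rcases lt_trichotomy (‖ε i‖) 1 with hl | heq | hg
    · have := pow_lt_one₀ h0 hl hm.ne'
      rw [hp] at this; linarith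
    · exact heq
    · have := one_lt_pow₀ hg hm.ne'
      rw [hp] at this; linarith
  have hc0 : ε 2 ≠ 0 := by
    intro hh
    have := habs 2
    rw [hh] at this; simp at this
  set c : ℂ := ε 2 with hc
  set a : ℂ := ε 0 / c with ha
  set b : ℂ := ε 1 / c with hb
  have hab : a + b + 1 = 0 := by
    rw [ha, hb]
    field_simp
    have := hsum
    rw [Fin.sum_univ_three] at this
    linear_combination this
  have hna : Complex.normSq a = 1 := by
    have : ‖a‖ = 1 := by
      rw [ha, norm_div, habs 0, habs 2]; norm_num
    rw [← Complex.sq_norm, this]; norm_num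
  have hnb : Complex.normSq b = 1 := by
    have : ‖b‖ = 1 := by
      rw [hb, norm_div, habs 1, habs 2]; norm_num
    rw [← Complex.sq_norm, this]; norm_num
  have hbval : b = -1 - a := by linear_combination hab
  have hna' : a.re ^ 2 + a.im ^ 2 = 1 := by
    rw [Complex.normSq_apply] at hna; nlinarith
  have hnb' : (-1 - a.re) ^ 2 + a.im ^ 2 = 1 := by
    rw [Complex.normSq_apply, hbval] at hnb
    simp [Complex.sub_re, Complex.sub_im, Complex.neg_re, Complex.neg_im] at hnb
    nlinarith
  have hare : a.re = -(1 / 2) := by nlinarith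
  have haim2 : a.im ^ 2 = 3 / 4 := by nlinarith
  have hfac : (a.im - Real.sqrt 3 / 2) * (a.im + Real.sqrt 3 / 2) = 0 := by nlinarith
  have hζ2re : (ζ ^ 2).re = -(1 / 2) := by
    rw [pow_two, Complex.mul_re, hre, him, hcos, hsin]; nlinarith
  have hζ2im : (ζ ^ 2).im = -(Real.sqrt 3 / 2) := by
    rw [pow_two, Complex.mul_im, hre, him, hcos, hsin]; ring
  have hε0 : ε 0 = a * c := by rw [ha]; field_simp
  have hε1 : ε 1 = b * c := by rw [hb]; field_simp
  refine ⟨c, h 2, ?_⟩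
  rcases mul_eq_zero.mp hfac with him1 | him2
  · -- a = ζ
    have haζ : a = ζ := by
      apply Complex.ext
      · rw [hare, hre, hcos]
      · rw [him, hsin]; exact sub_eq_zero.mp him1
    refine ⟨Equiv.refl _, ?_⟩
    intro i
    fin_cases i
    · show ε 0 = c * ζ ^ (0 + 1)
      rw [hε0, haζ]; ring
    · show ε 1 = c * ζ ^ (1 + 1)
      rw [hε1, hbval, haζ, show -1 - ζ = ζ ^ 2 by linear_combination -hζ2]; ring
    · show ε 2 = c * ζ ^ (2 + 1)
      rw [show ζ ^ (2 + 1) = 1 from hζ3, mul_one]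
  · -- a = ζ^2
    have haζ2 : a = ζ ^ 2 := by
      apply Complex.ext
      · rw [hare, hζ2re]
      · rw [hζ2im]; exact eq_neg_of_add_eq_zero_left him2
    refine ⟨Equiv.swap 0 1, ?_⟩
    intro i
    fin_cases i
    · show ε ((Equiv.swap 0 1) 0) = c * ζ ^ (0 + 1)
      rw [Equiv.swap_apply_left, hε1, hbval, haζ2,
        show -1 - ζ ^ 2 = ζ by linear_combination -hζ2]; ring
    · show ε ((Equiv.swap 0 1) 1) = c * ζ ^ (1 + 1)
      rw [Equiv.swap_apply_right, hε0, haζ2]; ring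
    · show ε ((Equiv.swap 0 1) 2) = c * ζ ^ (2 + 1)
      rw [show ζ ^ (2 + 1) = 1 from hζ3, mul_one,
        Equiv.swap_apply_of_ne_of_ne (by decide) (by decide)]
end

section
/- Let ε₁, ε₂, ε₃, ε₄ be roots of unity in ℂ with ε₁ + ε₂ + ε₃ + ε₄ = 0. Then, after a suitable relabelling, ε₂ = -ε₁ and ε₄ = -ε₃. -/
/-!
Roots of unity lie on the unit circle, where `z⁻¹ = conj z`; conjugating `∑ εᵢ = 0` therefore
gives `∑ εᵢ⁻¹ = 0` as well. Clearing denominators, the two relations combine into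
`(ε₀ + ε₁)(ε₀ + ε₂)(ε₀ + ε₃) = 0`, so `ε₀` cancels against one of the others, and the
remaining two then cancel against each other.
-/

open ComplexConjugate

theorem Complex.sum_inv_eq_conj_sum {ι : Type*} (s : Finset ι) {f : ι → ℂ}
    (hf : ∀ i ∈ s, ‖f i‖ = 1) : ∑ i ∈ s, (f i)⁻¹ = conj (∑ i ∈ s, f i) := by
  rw [map_sum]
  exact Finset.sum_congr rfl fun i hi => Complex.inv_eq_conj (hf i hi)

/-- `(a + b)(a + c)(a + d) = a²(a + b + c + d) + abcd(a⁻¹ + b⁻¹ + c⁻¹ + d⁻¹)`. -/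
theorem add_mul_add_mul_add_eq_zero {K : Type*} [Field K] {a b c d : K}
    (ha : a ≠ 0) (hb : b ≠ 0) (hc : c ≠ 0) (hd : d ≠ 0)
    (hsum : a + b + c + d = 0) (hinv : a⁻¹ + b⁻¹ + c⁻¹ + d⁻¹ = 0) :
    (a + b) * (a + c) * (a + d) = 0 := by
  field_simp at hinv
  linear_combination hinv + a ^ 2 * hsum

theorem exists_perm_eq_neg_of_sum_eq_zero {M : Type*} [AddCommGroup M] {v : Fin 4 → M}
    (hsum : ∑ i, v i = 0) {j : Fin 4} (hj : j ≠ 0) (h0j : v 0 + v j = 0) :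
    ∃ σ : Equiv.Perm (Fin 4), v (σ 1) = -v (σ 0) ∧ v (σ 3) = -v (σ 2) := by
  set σ := Equiv.swap 1 j
  have hσ0 : σ 0 = 0 := Equiv.swap_apply_of_ne_of_ne (by decide) hj.symm
  have hσ1 : σ 1 = j := Equiv.swap_apply_left 1 j
  have hσsum : ∑ i, v (σ i) = 0 := by rwa [Equiv.sum_comp σ v]
  rw [Fin.sum_univ_four, hσ0, hσ1, h0j, zero_add] at hσsum
  refine ⟨σ, ?_, eq_neg_of_add_eq_zero_left ((add_comm _ _).trans hσsum)⟩
  rw [hσ0, hσ1]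
  exact eq_neg_of_add_eq_zero_right h0j

theorem four_roots_of_unity_sum_zero (ε : Fin 4 → ℂ)
    (h : ∀ i, ∃ m : ℕ, 0 < m ∧ ε i ^ m = 1) (hsum : ∑ i, ε i = 0) :
    ∃ σ : Equiv.Perm (Fin 4), ε (σ 1) = -ε (σ 0) ∧ ε (σ 3) = -ε (σ 2) := by
  have hnorm : ∀ i, ‖ε i‖ = 1 := fun i => by
    obtain ⟨m, hm, hεm⟩ := h i
    exact Complex.norm_eq_one_of_pow_eq_one hεm hm.ne'
  have hne : ∀ i, ε i ≠ 0 := fun i => norm_ne_zero_iff.mp (by simp [hnorm i])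
  have hinv : ∑ i, (ε i)⁻¹ = 0 := by
    rw [Complex.sum_inv_eq_conj_sum _ fun i _ => hnorm i, hsum, map_zero]
  rw [Fin.sum_univ_four] at hinv
  have key := add_mul_add_mul_add_eq_zero (hne 0) (hne 1) (hne 2) (hne 3)
    (by rwa [Fin.sum_univ_four] at hsum) hinv
  obtain (h01 | h02) | h03 := mul_eq_zero.mp key |>.imp_left mul_eq_zero.mp
  · exact exists_perm_eq_neg_of_sum_eq_zero hsum (by decide) h01
  · exact exists_perm_eq_neg_of_sum_eq_zero hsum (by decide) h02
  · exact exists_perm_eq_neg_of_sum_eq_zero hsum (by decide) h03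
end

section
/- Let n ≥ 1 and let ε₁,…,ε₆ be 2ⁿ-th roots of unity in ℂ with ε₁ + ⋯ + ε₆ = 0. Then after a suitable relabelling, ε₂ = -ε₁, ε₄ = -ε₃, and ε₆ = -ε₅. -/
open Finset Polynomial

lemma pair_step (ε : Fin 6 → ℂ) (hne : ∀ i, ε i ≠ 0) (S : Finset (Fin 6))
    (hP : ∀ v : ℂ, (S.filter (fun k => ε k = v)).card = (S.filter (fun k => ε k = -v)).card)
    (i : Fin 6) (hi : i ∈ S) :
    ∃ j ∈ S, j ≠ i ∧ ε j = -ε i ∧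
      ∀ v : ℂ, (((S.erase i).erase j).filter (fun k => ε k = v)).card
        = (((S.erase i).erase j).filter (fun k => ε k = -v)).card := by
  have h0 := hP (ε i)
  have hpos : 0 < (S.filter (fun k => ε k = ε i)).card :=
    Finset.card_pos.2 ⟨i, Finset.mem_filter.2 ⟨hi, rfl⟩⟩
  rw [h0] at hpos
  obtain ⟨j, hj⟩ := Finset.card_pos.1 hpos
  rw [Finset.mem_filter] at hj
  obtain ⟨hjS, hjv⟩ := hj
  have hji : j ≠ i := by
    intro h; rw [h] at hjv
    exact hne i (by linear_combination (hjv : ε i = -ε i) / 2)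
  refine ⟨j, hjS, hji, hjv, ?_⟩
  intro v
  set T := (S.erase i).erase j with hT
  have hjT : j ∉ T := Finset.notMem_erase _ _
  have hiT : i ∉ insert j T := by
    simp [hT, Ne.symm hji, Finset.mem_erase]
  have hS : insert i (insert j T) = S := by
    rw [hT, Finset.insert_erase (Finset.mem_erase.2 ⟨hji, hjS⟩), Finset.insert_erase hi]
  have key := hP v
  rw [← hS] at key
  classical
  rw [Finset.card_filter, Finset.card_filter, Finset.sum_insert hiT, Finset.sum_insert hiT,
    Finset.sum_insert hjT, Finset.sum_insert hjT, ← Finset.card_filter, ← Finset.card_filter] at key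
  have hjveq : (ε j = v) ↔ (ε i = -v) := by rw [hjv]; constructor <;> intro h <;> linear_combination -h
  have hjveq' : (ε j = -v) ↔ (ε i = v) := by rw [hjv]; constructor <;> intro h <;> linear_combination -h
  by_cases h1 : ε i = v <;> by_cases h2 : ε i = -v <;>
    simp [h1, h2, hjveq, hjveq'] at key <;> omega

lemma coeffs_vanish {N : ℕ} (hN : 0 < N) (ζ : ℂ) (hζ : IsPrimitiveRoot ζ N)
    (c : ℕ → ℤ) (h : ∑ j ∈ Finset.range N.totient, (c j : ℂ) * ζ ^ j = 0) :
    ∀ j < N.totient, c j = 0 := by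
  set m := N.totient with hm
  set p : ℚ[X] := ∑ j ∈ Finset.range m, C (c j : ℚ) * X ^ j with hp
  have haev : aeval ζ p = 0 := by
    rw [hp, map_sum]
    rw [← h]
    refine Finset.sum_congr rfl fun j hj => ?_
    simp
  have hdvd : minpoly ℚ ζ ∣ p := minpoly.dvd ℚ ζ haev
  have hmin : cyclotomic N ℚ = minpoly ℚ ζ := cyclotomic_eq_minpoly_rat hζ hN
  have hdeg : (minpoly ℚ ζ).natDegree = m := by
    rw [← hmin, natDegree_cyclotomic]
  have hp0 : p = 0 := by
    by_contra hne
    have h1 : (minpoly ℚ ζ).natDegree ≤ p.natDegree := natDegree_le_of_dvd hdvd hne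
    have h2 : p.natDegree < m := by
      have : p.degree < (m : ℕ) := by
        rw [hp]
        apply lt_of_le_of_lt (Polynomial.degree_sum_le _ _)
        rw [Finset.sup_lt_iff (by exact_mod_cast WithBot.bot_lt_coe m)]
        intro j hj
        apply lt_of_le_of_lt (Polynomial.degree_C_mul_X_pow_le _ _)
        exact_mod_cast Finset.mem_range.1 hj
      exact Polynomial.natDegree_lt_iff_degree_lt hne |>.2 this
    omega
  intro j hjm
  have := congrArg (fun q => Polynomial.coeff q j) hp0
  simp only [hp, Polynomial.finset_sum_coeff, Polynomial.coeff_C_mul, Polynomial.coeff_X_pow,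
    Polynomial.coeff_zero] at this
  rw [Finset.sum_eq_single j (fun b _ hb => by simp [Ne.symm hb]) (fun h => absurd (Finset.mem_range.2 hjm) h)] at this
  simp at this
  exact_mod_cast this

lemma inj_helper (x0 x1 x2 x3 x4 x5 : Fin 6)
    (h01 : x0 ≠ x1) (h02 : x0 ≠ x2) (h03 : x0 ≠ x3) (h04 : x0 ≠ x4) (h05 : x0 ≠ x5)
    (h12 : x1 ≠ x2) (h13 : x1 ≠ x3) (h14 : x1 ≠ x4) (h15 : x1 ≠ x5)
    (h23 : x2 ≠ x3) (h24 : x2 ≠ x4) (h25 : x2 ≠ x5)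
    (h34 : x3 ≠ x4) (h35 : x3 ≠ x5) (h45 : x4 ≠ x5) :
    Function.Injective ![x0, x1, x2, x3, x4, x5] := by
  intro a b h
  fin_cases a <;> fin_cases b <;> simp at h ⊢ <;>
    first
      | rfl
      | exact absurd h (by assumption)
      | exact absurd h.symm (by assumption)

theorem six_two_power_roots_of_unity_sum_zero (n : ℕ) (hn : 1 ≤ n) (ε : Fin 6 → ℂ)
    (hε : ∀ i, ε i ^ (2 ^ n) = 1) (hsum : ∑ i, ε i = 0) :
    ∃ σ : Equiv.Perm (Fin 6),
      ε (σ 1) = -ε (σ 0) ∧ ε (σ 3) = -ε (σ 2) ∧ ε (σ 5) = -ε (σ 4) := by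
  classical
  set N := 2 ^ n with hNdef
  have hN : 0 < N := pow_pos (by norm_num) n -- may need pow_pos
  haveI : NeZero N := ⟨hN.ne'⟩
  set m := 2 ^ (n - 1) with hmdef
  have hm : 0 < m := pow_pos (by norm_num) _
  have hNm : N = 2 * m := by
    rw [hNdef, hmdef, ← pow_succ']
    congr 1
    omega
  have htot : N.totient = m := by
    rw [hNdef, Nat.totient_prime_pow Nat.prime_two hn, hmdef]
    norm_num
  set ζ : ℂ := Complex.exp (2 * Real.pi * Complex.I / N) with hζdef
  have hζ : IsPrimitiveRoot ζ N := Complex.isPrimitiveRoot_exp N hN.ne'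
  choose a haN haε using fun i => hζ.eq_pow_of_pow_eq_one (hε i)
  -- ζ ^ m = -1
  have hζm : ζ ^ m = -1 := by
    have h1 : (ζ ^ m - 1) * (ζ ^ m + 1) = 0 := by
      have h2 : ζ ^ N = 1 := hζ.pow_eq_one
      rw [hNm] at h2
      linear_combination h2 - 1
    rcases mul_eq_zero.1 h1 with h | h
    · exfalso
      exact hζ.pow_ne_one_of_pos_of_lt hm.ne' (by omega) (by linear_combination h)
    · linear_combination h
  set r : Fin 6 → ℕ := fun i => a i % m with hrdef
  set b : Fin 6 → ℕ := fun i => a i / m with hbdef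
  have hrm : ∀ i, r i < m := fun i => Nat.mod_lt _ hm
  have hb1 : ∀ i, b i ≤ 1 := by
    intro i
    have h1 := haN i
    have h2 : a i / m < 2 := Nat.div_lt_of_lt_mul (by omega)
    simp only [hbdef]
    omega
  have hdecomp : ∀ i, ε i = (-1 : ℂ) ^ (b i) * ζ ^ (r i) := by
    intro i
    rw [← haε i]
    conv_lhs => rw [← Nat.div_add_mod (a i) m]
    rw [pow_add, pow_mul, hζm]
  -- injectivity of (b, r) representation
  have hinj : ∀ (b₁ b₂ r₁ r₂ : ℕ), b₁ ≤ 1 → b₂ ≤ 1 → r₁ < m → r₂ < m →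
      (-1 : ℂ) ^ b₁ * ζ ^ r₁ = (-1 : ℂ) ^ b₂ * ζ ^ r₂ → b₁ = b₂ ∧ r₁ = r₂ := by
    intro b₁ b₂ r₁ r₂ hb₁ hb₂ hr₁ hr₂ heq
    have h1 : ζ ^ (m * b₁ + r₁) = ζ ^ (m * b₂ + r₂) := by
      rw [pow_add, pow_add, pow_mul, pow_mul, hζm]
      exact heq
    have hmul : ∀ bb : ℕ, bb ≤ 1 → m * bb ≤ m := by
      intro bb hbb
      calc m * bb ≤ m * 1 := Nat.mul_le_mul_left m hbb
        _ = m := mul_one m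
    have h2 : m * b₁ + r₁ = m * b₂ + r₂ :=
      hζ.pow_inj (by have := hmul b₁ hb₁; omega) (by have := hmul b₂ hb₂; omega) h1
    interval_cases b₁ <;> interval_cases b₂ <;> simp_all <;> omega
  -- the coefficient function
  set c : ℕ → ℤ := fun j => ∑ i ∈ Finset.univ.filter (fun i => r i = j), (-1 : ℤ) ^ (b i) with hcdef
  have hsum' : ∑ j ∈ Finset.range N.totient, (c j : ℂ) * ζ ^ j = 0 := by
    rw [htot]
    have : ∀ j ∈ Finset.range m, (c j : ℂ) * ζ ^ j
        = ∑ i ∈ Finset.univ.filter (fun i => r i = j), ε i := by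
      intro j hj
      rw [hcdef]
      push_cast
      rw [Finset.sum_mul]
      refine Finset.sum_congr rfl fun i hi => ?_
      rw [Finset.mem_filter] at hi
      rw [hdecomp i, hi.2]
    rw [Finset.sum_congr rfl this,
      Finset.sum_fiberwise_of_maps_to (fun i _ => Finset.mem_range.2 (hrm i)) ε]
    exact hsum
  have hc : ∀ j < m, c j = 0 := by
    intro j hj
    exact coeffs_vanish hN ζ hζ c hsum' j (by rwa [htot])
  -- counts of b = 0 vs b = 1 at each residue
  have hcount : ∀ j < m,
      (Finset.univ.filter (fun k => b k = 0 ∧ r k = j)).card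
        = (Finset.univ.filter (fun k => b k = 1 ∧ r k = j)).card := by
    intro j hj
    have h0 : ∑ i ∈ Finset.univ.filter (fun i => r i = j), (-1 : ℤ) ^ (b i) = 0 := hc j hj
    have hsplit : ∑ i ∈ Finset.univ.filter (fun i => r i = j), (-1 : ℤ) ^ (b i)
        = ((Finset.univ.filter (fun k => b k = 0 ∧ r k = j)).card : ℤ)
          - ((Finset.univ.filter (fun k => b k = 1 ∧ r k = j)).card : ℤ) := by
      rw [Finset.card_filter, Finset.card_filter]
      push_cast
      rw [← Finset.sum_sub_distrib]
      rw [Finset.sum_filter]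
      refine Finset.sum_congr rfl fun i _ => ?_
      have := hb1 i
      interval_cases h : b i <;> by_cases hr : r i = j <;> simp [hr, h]
    rw [hsplit] at h0
    omega
  -- key counting property
  have haux : ∀ (v : ℂ) (i : Fin 6), ε i = v →
      (Finset.univ.filter (fun k => ε k = v)).card
        = (Finset.univ.filter (fun k => ε k = -v)).card := by
    intro v i hiv
    have heqv : ∀ k, ε k = v ↔ (b k = b i ∧ r k = r i) := by
      intro k
      constructor
      · intro h
        rw [← hiv] at h
        rw [hdecomp k, hdecomp i] at h
        exact hinj _ _ _ _ (hb1 k) (hb1 i) (hrm k) (hrm i) h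
      · intro ⟨h1, h2⟩
        rw [← hiv, hdecomp k, hdecomp i, h1, h2]
    have hnegv : ∀ k, ε k = -v ↔ (b k = 1 - b i ∧ r k = r i) := by
      intro k
      have hneg : -v = (-1 : ℂ) ^ (1 - b i) * ζ ^ (r i) := by
        rw [← hiv, hdecomp i]
        have := hb1 i
        interval_cases h : b i <;> simp
      constructor
      · intro h
        rw [hneg, hdecomp k] at h
        exact hinj _ _ _ _ (hb1 k) (by omega) (hrm k) (hrm i) h
      · intro ⟨h1, h2⟩
        rw [hneg, hdecomp k, h1, h2]
    have e1 : (Finset.univ.filter (fun k => ε k = v))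
        = Finset.univ.filter (fun k => b k = b i ∧ r k = r i) :=
      Finset.filter_congr (fun k _ => by simpa using heqv k)
    have e2 : (Finset.univ.filter (fun k => ε k = -v))
        = Finset.univ.filter (fun k => b k = 1 - b i ∧ r k = r i) :=
      Finset.filter_congr (fun k _ => by simpa using hnegv k)
    rw [e1, e2]
    have := hb1 i
    interval_cases h : b i
    · simpa using hcount (r i) (hrm i)
    · simpa using (hcount (r i) (hrm i)).symm
  have hP : ∀ v : ℂ, (Finset.univ.filter (fun k => ε k = v)).card
      = (Finset.univ.filter (fun k => ε k = -v)).card := by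
    intro v
    by_cases h1 : ∃ i, ε i = v
    · obtain ⟨i, hi⟩ := h1
      exact haux v i hi
    · by_cases h2 : ∃ i, ε i = -v
      · obtain ⟨i, hi⟩ := h2
        have := haux (-v) i hi
        simpa [neg_neg] using this.symm
      · push_neg at h1 h2
        rw [Finset.filter_false_of_mem (fun k _ => h1 k),
            Finset.filter_false_of_mem (fun k _ => h2 k)]
  have hne : ∀ i, ε i ≠ 0 := by
    intro i h
    have := hε i
    rw [h, zero_pow hN.ne'] at this
    exact zero_ne_one this
  -- extract three pairs
  obtain ⟨j0, hj0S, hj0ne, hj0v, hP1⟩ := pair_step ε hne Finset.univ hP 0 (Finset.mem_univ 0)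
  set S1 := (Finset.univ.erase (0 : Fin 6)).erase j0 with hS1
  have hS1card : S1.card = 4 := by
    rw [hS1, Finset.card_erase_of_mem (Finset.mem_erase.2 ⟨hj0ne, Finset.mem_univ _⟩),
      Finset.card_erase_of_mem (Finset.mem_univ _)]
    simp
  obtain ⟨i1, hi1⟩ := Finset.card_pos.1 (by rw [hS1card]; norm_num : 0 < S1.card)
  obtain ⟨j1, hj1S, hj1ne, hj1v, hP2⟩ := pair_step ε hne S1 hP1 i1 hi1
  set S2 := (S1.erase i1).erase j1 with hS2
  have hS2card : S2.card = 2 := by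
    rw [hS2, Finset.card_erase_of_mem (Finset.mem_erase.2 ⟨hj1ne, hj1S⟩),
      Finset.card_erase_of_mem hi1, hS1card]
  obtain ⟨i2, hi2⟩ := Finset.card_pos.1 (by rw [hS2card]; norm_num : 0 < S2.card)
  obtain ⟨j2, hj2S, hj2ne, hj2v, _⟩ := pair_step ε hne S2 hP2 i2 hi2
  -- distinctness
  have d1 : i1 ≠ 0 ∧ i1 ≠ j0 := by
    have := hi1; rw [hS1, Finset.mem_erase, Finset.mem_erase] at this; exact ⟨this.2.1, this.1⟩
  have d2 : j1 ≠ 0 ∧ j1 ≠ j0 := by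
    have := hj1S; rw [hS1, Finset.mem_erase, Finset.mem_erase] at this; exact ⟨this.2.1, this.1⟩
  have d3 : i2 ≠ 0 ∧ i2 ≠ j0 ∧ i2 ≠ i1 ∧ i2 ≠ j1 := by
    have := hi2
    rw [hS2, Finset.mem_erase, Finset.mem_erase, hS1, Finset.mem_erase, Finset.mem_erase] at this
    exact ⟨this.2.2.2.1, this.2.2.1, this.2.1, this.1⟩
  have d4 : j2 ≠ 0 ∧ j2 ≠ j0 ∧ j2 ≠ i1 ∧ j2 ≠ j1 := by
    have := hj2S
    rw [hS2, Finset.mem_erase, Finset.mem_erase, hS1, Finset.mem_erase, Finset.mem_erase] at this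
    exact ⟨this.2.2.2.1, this.2.2.1, this.2.1, this.1⟩
  set f : Fin 6 → Fin 6 := ![0, j0, i1, j1, i2, j2] with hf
  have hinjf : Function.Injective f :=
    inj_helper _ _ _ _ _ _ (Ne.symm hj0ne) (Ne.symm d1.1) (Ne.symm d2.1) (Ne.symm d3.1)
      (Ne.symm d4.1) (Ne.symm d1.2) (Ne.symm d2.2) (Ne.symm d3.2.1) (Ne.symm d4.2.1)
      (Ne.symm hj1ne) (Ne.symm d3.2.2.1) (Ne.symm d4.2.2.1) (Ne.symm d3.2.2.2)
      (Ne.symm d4.2.2.2) (Ne.symm hj2ne)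
  have hbij : Function.Bijective f := Finite.injective_iff_bijective.1 hinjf
  refine ⟨Equiv.ofBijective f hbij, ?_, ?_, ?_⟩ <;>
    simp only [Equiv.ofBijective_apply, hf]
  · simpa using hj0v
  · simpa using hj1v
  · simpa using hj2v
end

section
/- Let n ≥ 1 and let ε₁,ε₂,ε₃,η₁,η₂,η₃ be 2ⁿ-th roots of unity with ε₁ε₂ε₃ = 1 and η₁η₂η₃ = 1. If the quotients δᵢ = εᵢ⁻¹ηᵢ satisfy δᵢ² = 1 for i = 1,2,3, then ε₁ + ε₂ + ε₃ + η₁ + η₂ + η₃ ≠ 0. -/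
private lemma four_pow_aux (n : ℕ) : ∃ m, 4 ^ n = 3 * m + 1 := by
  induction n with
  | zero => exact ⟨0, rfl⟩
  | succ k ih =>
    obtain ⟨m, hm⟩ := ih
    exact ⟨4 * m + 1, by rw [pow_succ]; omega⟩

private lemma abs_eq_one_of_pow {u : ℂ} {k : ℕ} (hk : k ≠ 0) (h : u ^ k = 1) :
    ‖u‖ = 1 := by
  have h1 : ‖u‖ ^ k = 1 := by rw [← norm_pow, h, norm_one]
  have h0 : 0 ≤ ‖u‖ := norm_nonneg u
  rcases lt_trichotomy ‖u‖ 1 with hl | he | hg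
  · have := pow_lt_one₀ h0 hl hk
    simp [h1] at this
  · exact he
  · have := one_lt_pow₀ hg hk
    simp [h1] at this

private lemma three_sum_ne (n : ℕ) (a b c : ℂ)
    (ha : a ^ (2 ^ n) = 1) (hb : b ^ (2 ^ n) = 1) (hc : c ^ (2 ^ n) = 1) :
    a + b + c ≠ 0 := by
  intro h
  have hk : (2 : ℕ) ^ n ≠ 0 := by positivity
  have ha0 : a ≠ 0 := by
    intro h0; rw [h0, zero_pow hk] at ha; exact zero_ne_one ha
  set u := b / a with hu_def
  set v := c / a with hv_def
  have hu : u ^ (2 ^ n) = 1 := by rw [hu_def, div_pow, hb, ha]; norm_num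
  have hv : v ^ (2 ^ n) = 1 := by rw [hv_def, div_pow, hc, ha]; norm_num
  have hu0 : u ≠ 0 := by
    intro h0; rw [h0, zero_pow hk] at hu; exact zero_ne_one hu
  have hv0 : v ≠ 0 := by
    intro h0; rw [h0, zero_pow hk] at hv; exact zero_ne_one hv
  have huv : 1 + u + v = 0 := by
    rw [hu_def, hv_def]
    field_simp
    linear_combination h
  have hcu : (starRingEnd ℂ) u = u⁻¹ := (Complex.inv_eq_conj (abs_eq_one_of_pow hk hu)).symm
  have hcv : (starRingEnd ℂ) v = v⁻¹ := (Complex.inv_eq_conj (abs_eq_one_of_pow hk hv)).symm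
  have hconj : 1 + u⁻¹ + v⁻¹ = 0 := by
    have := congrArg (starRingEnd ℂ) huv
    simpa [hcu, hcv] using this
  have key : u * v + v + u = 0 := by
    field_simp at hconj
    linear_combination hconj
  have huv1 : u * v = 1 := by linear_combination key - huv
  have hque : u ^ 2 + u + 1 = 0 := by linear_combination u * huv - huv1
  have hu3 : u ^ 3 = 1 := by linear_combination (u - 1) * hque
  have h4 : u ^ (4 ^ n) = 1 := by
    have h44 : (4 : ℕ) ^ n = 2 ^ n * 2 ^ n := by rw [← mul_pow]; norm_num
    rw [h44, pow_mul, hu, one_pow]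
  obtain ⟨m, hm⟩ := four_pow_aux n
  have hu1 : u = 1 := by
    calc u = (u ^ 3) ^ m * u := by rw [hu3]; ring
    _ = u ^ (3 * m + 1) := by ring
    _ = u ^ (4 ^ n) := by rw [hm]
    _ = 1 := h4
  rw [hu1] at hque
  norm_num at hque

theorem sum_six_two_power_roots_ne_zero (n : ℕ) (hn : 1 ≤ n)
    (ε₁ ε₂ ε₃ η₁ η₂ η₃ : ℂ)
    (hε₁ : ε₁ ^ (2 ^ n) = 1) (hε₂ : ε₂ ^ (2 ^ n) = 1) (hε₃ : ε₃ ^ (2 ^ n) = 1)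
    (hη₁ : η₁ ^ (2 ^ n) = 1) (hη₂ : η₂ ^ (2 ^ n) = 1) (hη₃ : η₃ ^ (2 ^ n) = 1)
    (hpε : ε₁ * ε₂ * ε₃ = 1) (hpη : η₁ * η₂ * η₃ = 1)
    (hδ₁ : (ε₁⁻¹ * η₁) ^ 2 = 1) (hδ₂ : (ε₂⁻¹ * η₂) ^ 2 = 1) (hδ₃ : (ε₃⁻¹ * η₃) ^ 2 = 1) :
    ε₁ + ε₂ + ε₃ + η₁ + η₂ + η₃ ≠ 0 := by
  have hk : (2 : ℕ) ^ n ≠ 0 := by positivity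
  have hε₁0 : ε₁ ≠ 0 := by
    intro h0; rw [h0, zero_pow hk] at hε₁; exact zero_ne_one hε₁
  have hε₂0 : ε₂ ≠ 0 := by
    intro h0; rw [h0, zero_pow hk] at hε₂; exact zero_ne_one hε₂
  have hε₃0 : ε₃ ≠ 0 := by
    intro h0; rw [h0, zero_pow hk] at hε₃; exact zero_ne_one hε₃
  have e1 : η₁ = ε₁ ∨ η₁ = -ε₁ := by
    rw [pow_two] at hδ₁
    rcases mul_self_eq_one_iff.mp hδ₁ with h | h
    · left; field_simp at h; linear_combination h
    · right; field_simp at h; linear_combination h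
  have e2 : η₂ = ε₂ ∨ η₂ = -ε₂ := by
    rw [pow_two] at hδ₂
    rcases mul_self_eq_one_iff.mp hδ₂ with h | h
    · left; field_simp at h; linear_combination h
    · right; field_simp at h; linear_combination h
  have e3 : η₃ = ε₃ ∨ η₃ = -ε₃ := by
    rw [pow_two] at hδ₃
    rcases mul_self_eq_one_iff.mp hδ₃ with h | h
    · left; field_simp at h; linear_combination h
    · right; field_simp at h; linear_combination h
  have h6 := three_sum_ne n ε₁ ε₂ ε₃ hε₁ hε₂ hε₃
  rcases e1 with e1 | e1 <;> rcases e2 with e2 | e2 <;> rcases e3 with e3 | e3 <;>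
    rw [e1, e2, e3] at hpη ⊢ <;> intro hsum <;>
    first
    | exact h6 (by linear_combination hsum / 2)
    | exact hε₁0 (by linear_combination hsum / 2)
    | exact hε₂0 (by linear_combination hsum / 2)
    | exact hε₃0 (by linear_combination hsum / 2)
    | exact two_ne_zero (by linear_combination -hpη - hpε : (2 : ℂ) = 0)
end

section
/- Let n ≥ 3 and let ε₁,ε₂,ε₃,η₁,η₂,η₃ be 2ⁿ-th roots of unity with ε₁ε₂ε₃ = 1, η₁η₂η₃ = 1, all quotients δᵢ = εᵢ⁻¹ηᵢ being 4-th roots of unity, and with some εᵢ of multiplicative order at least 8. If ε₁ + ε₂ + ε₃ + η₁ + η₂ + η₃ = 0, then the set {δ₁, δ₂, δ₃} equals either {i, -1} or {-i, -1}, where i is a primitive 4-th root of unity. -/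
/-!
Write `ηᵢ = εᵢ δᵢ`. Then `δ₁ δ₂ δ₃ = 1`, each `δᵢ ∈ {±1, ±i}`, and the hypothesis reads
`∑ εᵢ (1 + δᵢ) = 0`, in which a `δᵢ = -1` kills its term. Up to order the triples with product
`1` are `(1, 1, 1)`, `(1, -1, -1)`, `(1, i, -i)`, `(-1, i, i)` and `(-1, -i, -i)`. Since the `εᵢ`
lie on the unit circle, conjugating a linear relation among them replaces each `εᵢ` by `εᵢ⁻¹`;
clearing denominators gives a second, quadratic relation. For `(1, 1, 1)` the two relations make
the `εᵢ` the roots of `t³ - 1`, impossible for `2`-power roots of unity with vanishing sum; for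
`(1, i, -i)` they force `ε₁ = 1` and `ε₂, ε₃ ∈ {±1, ±i}`, against the order hypothesis;
`(1, -1, -1)` would need some `εᵢ = 0`. The two remaining triples give the two sets.
-/

open Complex ComplexConjugate

theorem eq_one_of_pow_two_pow_eq_one_of_pow_three_eq_one {M : Type*} [Monoid M] {x : M} {n : ℕ}
    (h2 : x ^ 2 ^ n = 1) (h3 : x ^ 3 = 1) : x = 1 :=
  (pow_eq_one_iff_of_coprime (Nat.Coprime.pow_right n (by norm_num))).1 ⟨h3, h2⟩

theorem eq_one_or_neg_one_or_I_or_neg_I_of_pow_four_eq_one {x : ℂ} (h : x ^ 4 = 1) :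
    x = 1 ∨ x = -1 ∨ x = I ∨ x = -I := by
  have key : (x - 1) * (x + 1) * ((x - I) * (x + I)) = 0 := by
    linear_combination h + (1 - x ^ 2) * I_sq
  simp only [mul_eq_zero, sub_eq_zero, add_eq_zero_iff_eq_neg] at key
  tauto

section UnitCircle

variable {x y z : ℂ}

theorem pow_three_eq_one_of_add_eq_zero_of_mul_eq_one (hx : ‖x‖ = 1) (hy : ‖y‖ = 1)
    (hz : ‖z‖ = 1) (hsum : x + y + z = 0) (hprod : x * y * z = 1) : x ^ 3 = 1 := by
  have hx0 : x ≠ 0 := by rintro rfl; simp at hx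
  have hy0 : y ≠ 0 := by rintro rfl; simp at hy
  have hz0 : z ≠ 0 := by rintro rfl; simp at hz
  have hconj : x⁻¹ + y⁻¹ + z⁻¹ = 0 := by
    rw [inv_eq_conj hx, inv_eq_conj hy, inv_eq_conj hz, ← map_add, ← map_add, hsum, map_zero]
  have he₂ : x * y + y * z + z * x = 0 :=
    calc x * y + y * z + z * x = x * y * z * (x⁻¹ + y⁻¹ + z⁻¹) := by field_simp; ring
      _ = 0 := by rw [hconj, mul_zero]
  linear_combination x ^ 2 * hsum - x * he₂ + hprod

theorem eq_neg_or_eq_I_mul_of_two_mul_add_eq_zero (hx : ‖x‖ = 1) (hy : ‖y‖ = 1)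
    (hz : ‖z‖ = 1) (h : 2 * x + (1 + I) * y + (1 - I) * z = 0) :
    (y = -x ∧ z = -x) ∨ (y = I * x ∧ z = -I * x) := by
  have hx0 : x ≠ 0 := by rintro rfl; simp at hx
  have hy0 : y ≠ 0 := by rintro rfl; simp at hy
  have hz0 : z ≠ 0 := by rintro rfl; simp at hz
  have hconj : 2 * x⁻¹ + (1 - I) * y⁻¹ + (1 + I) * z⁻¹ = 0 := by
    have := congrArg conj h
    simp only [map_add, map_mul, map_sub, map_one, map_ofNat, map_zero, conj_I] at this
    rw [inv_eq_conj hx, inv_eq_conj hy, inv_eq_conj hz]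
    linear_combination this
  have he : 2 * y * z + (1 - I) * x * z + (1 + I) * x * y = 0 := by
    calc _ = x * y * z * (2 * x⁻¹ + (1 - I) * y⁻¹ + (1 + I) * z⁻¹) := by field_simp
      _ = 0 := by rw [hconj, mul_zero]
  have hz' : z = -(1 + I) * x - I * y := by linear_combination (1 + I) / 2 * h + (z - y) / 2 * I_sq
  have key : (y + x) * (I * y + x) = 0 := by
    linear_combination -1 / 2 * he + (2 * y + (1 - I) * x) / 2 * hz' + (y * x + x ^ 2) / 2 * I_sq
  rcases mul_eq_zero.1 key with hyx | hyx
  · left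
    constructor
    · linear_combination hyx
    · linear_combination hz' - I * hyx
  · right
    have hy' : y = I * x := by linear_combination -I * hyx + y * I_sq
    exact ⟨hy', by linear_combination hz' - I * hy' - x * I_sq⟩

end UnitCircle

section RootsOfUnity

variable {n : ℕ} {x y z : ℂ}

theorem add_add_ne_zero_of_pow_two_pow_eq_one (hx : x ^ 2 ^ n = 1) (hy : y ^ 2 ^ n = 1)
    (hz : z ^ 2 ^ n = 1) (hprod : x * y * z = 1) : x + y + z ≠ 0 := by
  intro hsum
  have hn : 2 ^ n ≠ 0 := by positivity
  have nx := norm_eq_one_of_pow_eq_one hx hn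
  have ny := norm_eq_one_of_pow_eq_one hy hn
  have nz := norm_eq_one_of_pow_eq_one hz hn
  have hx1 := eq_one_of_pow_two_pow_eq_one_of_pow_three_eq_one hx
    (pow_three_eq_one_of_add_eq_zero_of_mul_eq_one nx ny nz hsum hprod)
  have hy1 := eq_one_of_pow_two_pow_eq_one_of_pow_three_eq_one hy
    (pow_three_eq_one_of_add_eq_zero_of_mul_eq_one ny nz nx (by linear_combination hsum)
      (by linear_combination hprod))
  have hz1 := eq_one_of_pow_two_pow_eq_one_of_pow_three_eq_one hz
    (pow_three_eq_one_of_add_eq_zero_of_mul_eq_one nz nx ny (by linear_combination hsum)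
      (by linear_combination hprod))
  rw [hx1, hy1, hz1] at hsum
  norm_num at hsum

theorem pow_four_eq_one_of_two_mul_add_eq_zero (hx : x ^ 2 ^ n = 1) (hy : y ^ 2 ^ n = 1)
    (hz : z ^ 2 ^ n = 1) (hprod : x * y * z = 1)
    (h : 2 * x + (1 + I) * y + (1 - I) * z = 0) : x ^ 4 = 1 ∧ y ^ 4 = 1 ∧ z ^ 4 = 1 := by
  have hn : 2 ^ n ≠ 0 := by positivity
  rcases eq_neg_or_eq_I_mul_of_two_mul_add_eq_zero (norm_eq_one_of_pow_eq_one hx hn)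
    (norm_eq_one_of_pow_eq_one hy hn) (norm_eq_one_of_pow_eq_one hz hn) h
    with ⟨rfl, rfl⟩ | ⟨rfl, rfl⟩
  · obtain rfl : x = 1 :=
      eq_one_of_pow_two_pow_eq_one_of_pow_three_eq_one hx (by linear_combination hprod)
    norm_num
  · obtain rfl : x = 1 :=
      eq_one_of_pow_two_pow_eq_one_of_pow_three_eq_one hx
        (by linear_combination hprod + x ^ 3 * I_sq)
    norm_num [I_pow_four]

theorem quotient_set_eq_of_sum_eq_zero {a b c : ℂ} (hx : x ^ 2 ^ n = 1) (hy : y ^ 2 ^ n = 1)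
    (hz : z ^ 2 ^ n = 1) (hxyz : x * y * z = 1) (habc : a * b * c = 1) (ha : a ^ 4 = 1)
    (hb : b ^ 4 = 1) (hord : ¬ (x ^ 4 = 1 ∧ y ^ 4 = 1 ∧ z ^ 4 = 1))
    (hsum : x * (1 + a) + y * (1 + b) + z * (1 + c) = 0) :
    ({a, b, c} : Set ℂ) = {I, -1} ∨ ({a, b, c} : Set ℂ) = {-I, -1} := by
  have hx0 : x ≠ 0 := by rintro rfl; simp at hx
  have hy0 : y ≠ 0 := by rintro rfl; simp at hy
  have hz0 : z ≠ 0 := by rintro rfl; simp at hz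
  have ha0 : a ≠ 0 := by rintro rfl; simp at ha
  have hb0 : b ≠ 0 := by rintro rfl; simp at hb
  obtain rfl : c = a⁻¹ * b⁻¹ := by field_simp; linear_combination habc
  -- sixteen cases, `(a, b)` running through `{1, -1, I, -I}²` in lexicographic order
  rcases eq_one_or_neg_one_or_I_or_neg_I_of_pow_four_eq_one ha with rfl | rfl | rfl | rfl <;>
  rcases eq_one_or_neg_one_or_I_or_neg_I_of_pow_four_eq_one hb with rfl | rfl | rfl | rfl <;>
  simp only [inv_one, inv_neg, inv_I, one_mul, mul_one, neg_neg, neg_mul, mul_neg, I_mul_I]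
    at hsum ⊢
  · exact absurd (by linear_combination hsum / 2)
      (add_add_ne_zero_of_pow_two_pow_eq_one hx hy hz hxyz)
  · exact absurd (by linear_combination hsum / 2) hx0
  · have := pow_four_eq_one_of_two_mul_add_eq_zero hx hy hz (by linear_combination hxyz)
      (by linear_combination hsum)
    tauto
  · have := pow_four_eq_one_of_two_mul_add_eq_zero hx hz hy (by linear_combination hxyz)
      (by linear_combination hsum)
    tauto
  · exact absurd (by linear_combination hsum / 2) hy0
  · exact absurd (by linear_combination hsum / 2) hz0
  · exact Or.inl (by simp [Set.pair_comm])
  · exact Or.inr (by simp [Set.pair_comm])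
  · have := pow_four_eq_one_of_two_mul_add_eq_zero hy hx hz (by linear_combination hxyz)
      (by linear_combination hsum)
    tauto
  · exact Or.inl (by simp [Set.pair_comm])
  · exact Or.inl (by simp [Set.pair_comm])
  · have := pow_four_eq_one_of_two_mul_add_eq_zero hz hx hy (by linear_combination hxyz)
      (by linear_combination hsum)
    tauto
  · have := pow_four_eq_one_of_two_mul_add_eq_zero hy hz hx (by linear_combination hxyz)
      (by linear_combination hsum)
    tauto
  · exact Or.inr (by simp [Set.pair_comm])
  · have := pow_four_eq_one_of_two_mul_add_eq_zero hz hy hx (by linear_combination hxyz)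
      (by linear_combination hsum)
    tauto
  · exact Or.inr (by simp [Set.pair_comm])

end RootsOfUnity

theorem quotient_set_of_vanishing_sum_general (n : ℕ) (ε η : Fin 3 → ℂ)
    (hε : ∀ i, ε i ^ (2 ^ n) = 1)
    (hpε : ε 0 * ε 1 * ε 2 = 1) (hpη : η 0 * η 1 * η 2 = 1)
    (hδ : ∀ i, ((ε i)⁻¹ * η i) ^ 4 = 1)
    (ho : ∃ i, 8 ≤ orderOf (ε i))
    (hsum : ε 0 + ε 1 + ε 2 + η 0 + η 1 + η 2 = 0) :
    ({(ε 0)⁻¹ * η 0, (ε 1)⁻¹ * η 1, (ε 2)⁻¹ * η 2} : Set ℂ) = {Complex.I, -1} ∨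
    ({(ε 0)⁻¹ * η 0, (ε 1)⁻¹ * η 1, (ε 2)⁻¹ * η 2} : Set ℂ) = {-Complex.I, -1} := by
  have hη (i : Fin 3) : ε i * ((ε i)⁻¹ * η i) = η i :=
    mul_inv_cancel_left₀ (IsUnit.of_pow_eq_one (hε i) (by positivity)).ne_zero _
  refine quotient_set_eq_of_sum_eq_zero (hε 0) (hε 1) (hε 2) hpε ?_ (hδ 0) (hδ 1) ?_ ?_
  · calc _ = (ε 0 * ε 1 * ε 2)⁻¹ * (η 0 * η 1 * η 2) := by ring
      _ = 1 := by rw [hpε, hpη, inv_one, one_mul]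
  · rintro ⟨h₀, h₁, h₂⟩
    obtain ⟨i, hi⟩ := ho
    have h₄ : ε i ^ 4 = 1 := by fin_cases i <;> assumption
    have := orderOf_le_of_pow_eq_one (by norm_num) h₄
    omega
  · linear_combination hsum + hη 0 + hη 1 + hη 2

theorem quotient_set_of_vanishing_sum (n : ℕ) (hn : 3 ≤ n) (ε η : Fin 3 → ℂ)
    (hε : ∀ i, ε i ^ (2 ^ n) = 1) (hη : ∀ i, η i ^ (2 ^ n) = 1)
    (hpε : ε 0 * ε 1 * ε 2 = 1) (hpη : η 0 * η 1 * η 2 = 1)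
    (hδ : ∀ i, ((ε i)⁻¹ * η i) ^ 4 = 1)
    (ho : ∃ i, 8 ≤ orderOf (ε i))
    (hsum : ε 0 + ε 1 + ε 2 + η 0 + η 1 + η 2 = 0) :
    ({(ε 0)⁻¹ * η 0, (ε 1)⁻¹ * η 1, (ε 2)⁻¹ * η 2} : Set ℂ) = {Complex.I, -1} ∨
    ({(ε 0)⁻¹ * η 0, (ε 1)⁻¹ * η 1, (ε 2)⁻¹ * η 2} : Set ℂ) = {-Complex.I, -1} :=
  quotient_set_of_vanishing_sum_general n ε η hε hpε hpη hδ ho hsum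
end

section
/- Let G be a finite nilpotent group. Then the set of non-vanishing elements of G equals the center Z(G); consequently, the proportion of vanishing elements of G is (m-1)/m where m = [G : Z(G)]. -/
open CategoryTheory Module

def IsVanishing {G : Type} [Group G] (g : G) : Prop :=
  ∃ V : FDRep ℂ G, CategoryTheory.Simple V ∧ V.character g = 0

section Aux

variable {G : Type} [Group G]

/-- Module-level irreducibility of a representation. -/
def RepIrred {W : Type} [AddCommGroup W] [Module ℂ W] (ρ : Representation ℂ G W) : Prop :=
  Nontrivial W ∧ ∀ U : Submodule ℂ W, (∀ g : G, ∀ x ∈ U, ρ g x ∈ U) → U = ⊥ ∨ U = ⊤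

/-- Restriction of a representation to an invariant submodule. -/
def subRep {W : Type} [AddCommGroup W] [Module ℂ W] (ρ : Representation ℂ G W)
    (U : Submodule ℂ W) (hU : ∀ g : G, ∀ x ∈ U, ρ g x ∈ U) : Representation ℂ G U where
  toFun g := (ρ g).restrict (hU g)
  map_one' := by ext x; simp
  map_mul' g h := by ext x; simp [LinearMap.restrict_apply]

/-- The inclusion of an invariant submodule, as a morphism in `FDRep`. -/
def subRepIncl (V : FDRep ℂ G) (U : Submodule ℂ (V : Type))
    (hU : ∀ g : G, ∀ x ∈ U, V.ρ g x ∈ U) : FDRep.of (subRep V.ρ U hU) ⟶ V where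
  hom := FGModuleCat.ofHom U.subtype
  comm g := by ext x; rfl

theorem mono_subRepIncl (V : FDRep ℂ G) (U : Submodule ℂ (V : Type))
    (hU : ∀ g : G, ∀ x ∈ U, V.ρ g x ∈ U) : Mono (subRepIncl V U hU) := by
  apply Preadditive.mono_of_cancel_zero
  intro P g hg
  ext x
  exact DFunLike.congr_fun (congrArg (fun φ => φ.hom.hom.hom) hg) x

theorem repIrred_of_simple (V : FDRep ℂ G) [hs : Simple V] : RepIrred V.ρ := by
  constructor
  · by_contra hnt
    rw [not_nontrivial_iff_subsingleton] at hnt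
    have h1 : 𝟙 V = 0 := by
      ext : 1
      ext x
      exact @Subsingleton.elim _ hnt _ _
    exact (Simple.mono_isIso_iff_nonzero (𝟙 V)).mp inferInstance h1
  · intro U hU
    by_cases hbot : U = ⊥
    · exact Or.inl hbot
    right
    haveI := mono_subRepIncl V U hU
    have hne : subRepIncl V U hU ≠ 0 := by
      intro h0
      apply hbot
      rw [Submodule.eq_bot_iff]
      intro x hx
      have := DFunLike.congr_fun (congrArg (fun φ => φ.hom.hom.hom) h0) (⟨x, hx⟩ : U)
      exact this
    have hiso : IsIso (subRepIncl V U hU) := (Simple.mono_isIso_iff_nonzero _).mpr hne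
    rw [Submodule.eq_top_iff']
    intro x
    have hsurj : Function.Surjective (subRepIncl V U hU).hom := by
      have : IsIso (subRepIncl V U hU).hom := by
        have := Functor.map_isIso (Action.forget (FGModuleCat ℂ) (MonCat.of G)) (subRepIncl V U hU)
        exact this
      exact (FGModuleCat.isoToLinearEquiv (asIso (subRepIncl V U hU).hom)).surjective
    obtain ⟨y, hy⟩ := hsurj x
    rw [← hy]; exact (show (subRepIncl V U hU).hom.hom.hom y = y.1 from rfl) ▸ y.2

theorem simple_of_repIrred {W : Type} [AddCommGroup W] [Module ℂ W] [FiniteDimensional ℂ W]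
    (ρ : Representation ℂ G W) (h : RepIrred ρ) : Simple (FDRep.of ρ) := by
  obtain ⟨hnt, hU⟩ := h
  constructor
  intro Y f hmono
  constructor
  · intro hiso h0
    have h1 : 𝟙 (FDRep.of ρ) = inv f ≫ f := (IsIso.inv_hom_id f).symm
    simp only [h0, Limits.comp_zero] at h1
    have h2 := DFunLike.congr_fun (congrArg (fun φ => φ.hom.hom.hom) h1)
    obtain ⟨x, y, hxy⟩ := hnt
    exact hxy (sub_eq_zero.mp (by exact h2 (x - y)))
  · intro hf0
    have hrinv : ∀ g : G, ∀ x ∈ LinearMap.range f.hom.hom.hom, ρ g x ∈ LinearMap.range f.hom.hom.hom := by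
      rintro g x ⟨y, rfl⟩
      exact ⟨Y.ρ g y, by exact ConcreteCategory.congr_hom (f.comm g) y⟩
    have hrange : LinearMap.range f.hom.hom.hom = ⊤ := by
      rcases hU (LinearMap.range f.hom.hom.hom) hrinv with hb | ht
      · exfalso; apply hf0; ext x
        have hx : f.hom x ∈ LinearMap.range f.hom.hom.hom := ⟨x, rfl⟩
        rw [hb] at hx
        simp at hx; exact hx
      · exact ht
    have hker : LinearMap.ker f.hom.hom.hom = ⊥ := by
      set K := LinearMap.ker f.hom.hom.hom with hK
      have hKinv : ∀ g : G, ∀ x ∈ K, Y.ρ g x ∈ K := by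
        intro g x hx
        have h5 : f.hom (Y.ρ g x) = ρ g (f.hom x) := by exact ConcreteCategory.congr_hom (f.comm g) x
        have h6 : f.hom x = 0 := hx
        show f.hom (Y.ρ g x) = 0
        rw [h5, h6, map_zero]
      have hcomp : subRepIncl Y K hKinv ≫ f = 0 := by
        ext x
        exact x.2
      have := Limits.zero_of_comp_mono f hcomp
      rw [Submodule.eq_bot_iff]
      intro x hx
      have h7 := DFunLike.congr_fun (congrArg (fun φ => φ.hom.hom.hom) this) (⟨x, hx⟩ : K)
      exact h7
    have hinj : Function.Injective f.hom.hom.hom := by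
      rw [← LinearMap.ker_eq_bot]; exact hker
    have hsurj : Function.Surjective f.hom.hom.hom := LinearMap.range_eq_top.mp hrange
    let e : (Y : Type) ≃ₗ[ℂ] W := LinearEquiv.ofBijective f.hom.hom.hom ⟨hinj, hsurj⟩
    refine ⟨⟨⟨FGModuleCat.ofHom e.symm.toLinearMap, ?_⟩, ?_, ?_⟩⟩
    · intro g
      ext x
      apply hinj
      show f.hom (e.symm (ρ g x)) = f.hom (Y.ρ g (e.symm x))
      have h3 : f.hom (Y.ρ g (e.symm x)) = ρ g (f.hom (e.symm x)) := by
        exact ConcreteCategory.congr_hom (f.comm g) (e.symm x)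
      rw [h3]
      have h4 : ∀ y, f.hom (e.symm y) = y := fun y => e.apply_symm_apply y
      rw [h4, h4]
    · ext x
      exact e.symm_apply_apply x
    · ext x
      exact e.apply_symm_apply x

/-- `ρ(z)` as a morphism `V ⟶ V` when `z` is central. -/
noncomputable def centralHom (V : FDRep ℂ G) {z : G} (hz : z ∈ Subgroup.center G) : V ⟶ V where
  hom := FGModuleCat.ofHom (V.ρ z)
  comm g := by
    ext x
    show V.ρ z (V.ρ g x) = V.ρ g (V.ρ z x)
    rw [← Module.End.mul_apply, ← Module.End.mul_apply, ← map_mul, ← map_mul,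
      (Subgroup.mem_center_iff.mp hz g)]

theorem central_scalar (V : FDRep ℂ G) [Simple V] {z : G} (hz : z ∈ Subgroup.center G) :
    ∃ c : ℂ, V.ρ z = c • (1 : (V : Type) →ₗ[ℂ] (V : Type)) := by
  obtain ⟨c, hc⟩ := endomorphism_simple_eq_smul_id ℂ (centralHom V hz)
  refine ⟨c, ?_⟩
  have := congrArg (fun φ => φ.hom.hom.hom) hc
  exact this.symm

theorem char_central_mul (V : FDRep ℂ G) {z : G} (c : ℂ)
    (hzc : V.ρ z = c • (1 : (V : Type) →ₗ[ℂ] (V : Type))) (g : G) :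
    V.character (g * z) = c * V.character g := by
  unfold FDRep.character
  rw [map_mul, hzc, Module.End.mul_eq_comp, LinearMap.comp_smul, Module.End.one_eq_id,
    LinearMap.comp_id, map_smul, smul_eq_mul]

theorem center_not_vanishing {g : G} (hg : g ∈ Subgroup.center G) : ¬ IsVanishing g := by
  rintro ⟨V, hV, hchar⟩
  haveI := hV
  haveI : Nontrivial (V : Type) := (repIrred_of_simple V).1
  obtain ⟨c, hc⟩ := central_scalar V hg
  have hc0 : c ≠ 0 := by
    rintro rfl
    have h1 : V.ρ g * V.ρ g⁻¹ = 1 := by rw [← map_mul, mul_inv_cancel, map_one]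
    rw [hc, zero_smul, zero_mul] at h1
    obtain ⟨x, y, hxy⟩ := (repIrred_of_simple V).1
    apply hxy
    have hx := DFunLike.congr_fun h1 (x - y)
    simpa [sub_eq_zero] using hx.symm
  have h2 : V.character (1 * g) = c * V.character 1 := char_central_mul V c hc 1
  rw [one_mul, hchar, FDRep.char_one] at h2
  have h4 : Module.finrank ℂ (V : Type) ≠ 0 := Module.finrank_pos.ne'
  rcases mul_eq_zero.mp h2.symm with h | h
  · exact hc0 h
  · exact h4 (by exact_mod_cast h)

/-- Quotient representation by an invariant submodule. -/
def quotRep {W : Type} [AddCommGroup W] [Module ℂ W] (ρ : Representation ℂ G W)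
    (U : Submodule ℂ W) (hU : ∀ g : G, ∀ x ∈ U, ρ g x ∈ U) : Representation ℂ G (W ⧸ U) where
  toFun g := Submodule.mapQ U U (ρ g) (fun x hx => hU g x hx)
  map_one' := by
    apply Submodule.linearMap_qext
    apply LinearMap.ext; intro x
    simp
  map_mul' g h := by
    apply Submodule.linearMap_qext
    apply LinearMap.ext; intro x
    simp [Submodule.mapQ_apply]

theorem nontrivial_of_rho_ne_one {W : Type} [AddCommGroup W] [Module ℂ W]
    (ρ : Representation ℂ G W) {z : G} (h : ρ z ≠ 1) : Nontrivial W := by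
  have : ∃ x : W, ρ z x ≠ x := by
    by_contra hx
    push_neg at hx
    exact h (LinearMap.ext fun x => hx x)
  obtain ⟨x, hx⟩ := this
  refine ⟨x, 0, fun h0 => hx ?_⟩
  subst h0; simp

theorem exists_simple_rho_ne_one (z : G) [Finite G] :
    ∀ (n : ℕ) (W : Type) (_ : AddCommGroup W) (_ : Module ℂ W) (_ : FiniteDimensional ℂ W)
    (ρ : Representation ℂ G W), ρ z ≠ 1 → finrank ℂ W ≤ n →
    ∃ V : FDRep ℂ G, Simple V ∧ V.ρ z ≠ 1 := by
  intro n
  induction n with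
  | zero =>
    intro W _ _ _ ρ hzn hn
    haveI := nontrivial_of_rho_ne_one ρ hzn
    have := Module.finrank_pos (R := ℂ) (M := W)
    omega
  | succ n ih =>
    intro W _ _ _ ρ hzn hn
    haveI := nontrivial_of_rho_ne_one ρ hzn
    by_cases hirr : ∀ U : Submodule ℂ W, (∀ g : G, ∀ x ∈ U, ρ g x ∈ U) → U = ⊥ ∨ U = ⊤
    · refine ⟨FDRep.of ρ, simple_of_repIrred ρ ⟨‹_›, hirr⟩, ?_⟩
      exact hzn
    push_neg at hirr
    obtain ⟨U, hUinv, hUb, hUt⟩ := hirr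
    by_cases h1 : ∀ u ∈ U, ρ z u = u
    · by_cases h2 : ∀ x : W, ρ z x - x ∈ U
      · exfalso
        apply hzn
        set N : W →ₗ[ℂ] W := ρ z - 1 with hN
        have hNN : ∀ x : W, N (N x) = 0 := by
          intro x
          have hmem : N x ∈ U := by simpa [hN] using h2 x
          have h8 : ρ z (ρ z x - x) = ρ z x - x := h1 (N x) hmem
          simp only [hN, LinearMap.sub_apply, Module.End.one_apply]
          rw [h8]
          exact sub_self _
        have hpow : ∀ m : ℕ, (ρ z) ^ m = 1 + m • N := by
          intro m
          induction m with
          | zero => simp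
          | succ m ihm =>
            rw [pow_succ, ihm]
            have hz1 : ρ z = 1 + N := by simp [hN]
            rw [hz1]
            apply LinearMap.ext
            intro x
            simp only [Module.End.mul_apply, LinearMap.add_apply, Module.End.one_apply,
              LinearMap.smul_apply, map_add, add_smul, one_smul]
            have := hNN x
            simp [map_nsmul, this]
            abel
        have horder : (ρ z) ^ (orderOf z) = 1 := by
          rw [← map_pow, pow_orderOf_eq_one, map_one]
        have h3 : (orderOf z : ℕ) • N = 0 := by
          have h9 := hpow (orderOf z)
          rw [horder] at h9
          exact (left_eq_add.mp h9)
        have h4 : N = 0 := by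
          apply LinearMap.ext
          intro x
          have := DFunLike.congr_fun h3 x
          simp only [LinearMap.smul_apply, LinearMap.zero_apply] at this
          have ho : (orderOf z : ℂ) ≠ 0 := by
            exact_mod_cast (Nat.pos_of_ne_zero (orderOf_pos z).ne').ne'
          have : (orderOf z : ℂ) • N x = 0 := by
            rw [← this]; simp [Nat.cast_smul_eq_nsmul ℂ]
          simpa [ho] using (smul_eq_zero.mp this)
        apply LinearMap.ext
        intro x
        have := DFunLike.congr_fun h4 x
        simp [hN, sub_eq_zero] at this
        simp [this]
      · push_neg at h2
        obtain ⟨x, hx⟩ := h2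
        have hq : quotRep ρ U hUinv z ≠ 1 := by
          intro hq1
          apply hx
          have := DFunLike.congr_fun hq1 (Submodule.Quotient.mk x)
          simp only [quotRep, MonoidHom.coe_mk, OneHom.coe_mk, Submodule.mapQ_apply,
            Module.End.one_apply] at this
          exact (Submodule.Quotient.eq U).mp this
        have hfr : finrank ℂ (W ⧸ U) ≤ n := by
          have h5 := Submodule.finrank_quotient_add_finrank U
          have h6 : 0 < finrank ℂ U := by
            by_contra h7
            push_neg at h7
            exact hUb (Submodule.finrank_eq_zero.mp (by omega))
          omega
        exact ih (W ⧸ U) inferInstance inferInstance inferInstance (quotRep ρ U hUinv) hq hfr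
    · push_neg at h1
      obtain ⟨u, hu, hzu⟩ := h1
      have hs : subRep ρ U hUinv z ≠ 1 := by
        intro hs1
        apply hzu
        have := DFunLike.congr_fun hs1 (⟨u, hu⟩ : U)
        exact congrArg Subtype.val this
      have hfr : finrank ℂ U ≤ n := by
        have := Submodule.finrank_lt hUt
        omega
      exact ih U inferInstance inferInstance inferInstance (subRep ρ U hUinv) hs hfr

theorem regular_rho_ne_one [Fintype G] {z : G} (hz : z ≠ 1) :
    (Representation.ofMulAction ℂ G G) z ≠ 1 := by
  intro h
  have := DFunLike.congr_fun h (MonoidAlgebra.single (1 : G) (1 : ℂ))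
  rw [Representation.ofMulAction_single] at this
  simp only [smul_eq_mul, mul_one, Module.End.one_apply] at this
  have := MonoidAlgebra.single_inj.mp this
  rcases this with ⟨h1, _⟩ | ⟨h1, _⟩
  · exact hz h1
  · exact one_ne_zero h1

theorem exists_simple_rho_ne_one' [Fintype G] {z : G} (hz : z ≠ 1) :
    ∃ V : FDRep ℂ G, Simple V ∧ V.ρ z ≠ 1 :=
  exists_simple_rho_ne_one z (finrank ℂ (MonoidAlgebra ℂ G)) (MonoidAlgebra ℂ G) inferInstance inferInstance
    inferInstance (Representation.ofMulAction ℂ G G) (regular_rho_ne_one hz) le_rfl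

theorem pullback_char {H : Type} [Group H] (φ : G →* H) (hφ : Function.Surjective φ)
    (W : FDRep ℂ H) [Simple W] :
    ∃ V : FDRep ℂ G, Simple V ∧ ∀ g : G, V.character g = W.character (φ g) := by
  obtain ⟨hnt, hU⟩ := repIrred_of_simple W
  refine ⟨FDRep.of (W.ρ.comp φ), simple_of_repIrred _ ⟨hnt, ?_⟩, fun g => rfl⟩
  intro U hUinv
  apply hU
  intro h x hx
  obtain ⟨g, rfl⟩ := hφ h
  exact hUinv g x hx

end Aux

theorem nonvanishing_mem_center :
    ∀ (n : ℕ) (G : Type) [Group G] [Fintype G] [Group.IsNilpotent G],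
      Group.nilpotencyClass G ≤ n → ∀ g : G, ¬ IsVanishing g → g ∈ Subgroup.center G := by
  intro n
  induction n with
  | zero =>
    intro G _ _ _ hc g _
    haveI : Subsingleton G := by
      rw [← nilpotencyClass_zero_iff_subsingleton]
      omega
    rw [Subgroup.mem_center_iff]
    intro h
    exact congrArg (· * g) (Subsingleton.elim h (g * h * g⁻¹)) |>.trans (by group)
  | succ n ih =>
    intro G _ _ _ hc g hg
    by_cases hcen : g ∈ Subgroup.center G
    · exact hcen
    exfalso
    set Z := Subgroup.center G
    haveI : Finite (G ⧸ Z) := Quotient.finite _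
    haveI : Fintype (G ⧸ Z) := Fintype.ofFinite _
    have hg' : ¬ IsVanishing ((QuotientGroup.mk' Z) g) := by
      rintro ⟨W, hW, hWchar⟩
      haveI := hW
      obtain ⟨V, hV, hVchar⟩ :=
        pullback_char (QuotientGroup.mk' Z) (QuotientGroup.mk'_surjective Z) W
      exact hg ⟨V, hV, by rw [hVchar g, hWchar]⟩
    have hclass : Group.nilpotencyClass (G ⧸ Z) ≤ n := by
      have hZc : Group.nilpotencyClass (G ⧸ Z) = Group.nilpotencyClass G - 1 :=
        nilpotencyClass_quotient_center
      omega
    have hgZ : (QuotientGroup.mk' Z) g ∈ Subgroup.center (G ⧸ Z) :=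
      ih (G ⧸ Z) hclass _ hg'
    rw [Subgroup.mem_center_iff] at hcen
    push_neg at hcen
    obtain ⟨h, hh⟩ := hcen
    set z := h * g * h⁻¹ * g⁻¹ with hzdef
    have hz1 : z ≠ 1 := by
      intro h1
      apply hh
      calc h * g = z * (g * h) := by rw [hzdef]; group
        _ = g * h := by rw [h1, one_mul]
    have hzZ : z ∈ Z := by
      have : (QuotientGroup.mk' Z) z = 1 := by
        have hcomm := Subgroup.mem_center_iff.mp hgZ ((QuotientGroup.mk' Z) h)
        simp only [hzdef, map_mul, map_inv]
        rw [hcomm]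
        group
      simpa [QuotientGroup.ker_mk'] using
        (QuotientGroup.eq_one_iff z).mp this
    obtain ⟨V, hV, hVz⟩ := exists_simple_rho_ne_one' hz1
    haveI := hV
    obtain ⟨c, hcs⟩ := central_scalar V hzZ
    have hc1 : c ≠ 1 := by
      intro h1
      apply hVz
      rw [hcs, h1, one_smul]
    have hzg : z * g = h * g * h⁻¹ := by rw [hzdef]; group
    have e1 : V.character g = c * V.character g := by
      conv_lhs => rw [← FDRep.char_conj V g h]
      rw [show h * g * h⁻¹ = z * g from hzg.symm, FDRep.char_mul_comm,
        char_central_mul V c hcs g]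
    have : V.character g = 0 := by
      have h2 : (c - 1) * V.character g = 0 := by linear_combination -e1
      rcases mul_eq_zero.mp h2 with h3 | h3
      · exact absurd (by linear_combination h3) hc1
      · exact h3
    exact hg ⟨V, hV, this⟩

theorem nilpotent_nonvanishing_eq_center (G : Type) [Group G] [Fintype G]
    (h : Group.IsNilpotent G) :
    {g : G | ¬ IsVanishing g} = (Subgroup.center G : Set G) ∧
    (Nat.card {g : G // IsVanishing g} : ℚ) / Nat.card G =
      (((Subgroup.center G).index : ℚ) - 1) / ((Subgroup.center G).index : ℚ) := by
  classical
  haveI := h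
  have hset : {g : G | ¬ IsVanishing g} = (Subgroup.center G : Set G) := by
    ext g
    simp only [Set.mem_setOf_eq, SetLike.mem_coe]
    exact ⟨fun hg => nonvanishing_mem_center (Group.nilpotencyClass G) G le_rfl g hg,
      fun hg => center_not_vanishing hg⟩
  refine ⟨hset, ?_⟩
  have hiff : ∀ g : G, IsVanishing g ↔ g ∉ Subgroup.center G := by
    intro g
    constructor
    · intro hv hc
      exact center_not_vanishing hc hv
    · intro hc
      by_contra hv
      exact hc (by simpa using Set.ext_iff.mp hset g |>.mp hv)
  set k := Nat.card (Subgroup.center G) with hk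
  set m := (Subgroup.center G).index with hm
  have hmk : m * k = Nat.card G := Subgroup.index_mul_card (Subgroup.center G)
  have hkpos : 0 < k := Nat.card_pos
  have hcard : Nat.card {g : G // IsVanishing g} = Nat.card G - k := by
    have e1 : Nat.card {g : G // IsVanishing g} = Nat.card {g : G // g ∉ Subgroup.center G} :=
      Nat.card_congr (Equiv.subtypeEquivRight hiff)
    rw [e1, Nat.card_eq_fintype_card, Fintype.card_subtype_compl, hk,
      Nat.card_eq_fintype_card, Nat.card_eq_fintype_card]
  have hmpos : 0 < m := by
    rcases Nat.eq_zero_or_pos m with h0 | h0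
    · rw [h0, zero_mul] at hmk
      have : 0 < Nat.card G := Nat.card_pos
      omega
    · exact h0
  rw [hcard, ← hmk]
  have hle : k ≤ m * k := Nat.le_mul_of_pos_left k hmpos
  push_cast [Nat.cast_sub hle]
  have hkq : (k : ℚ) ≠ 0 := by positivity
  have hmq : (m : ℚ) ≠ 0 := by positivity
  field_simp
end

section
/- Let A be a finite abelian group and y an automorphism of A of order 2. Then [Â, y] ≅ [A, y], where Â = Hom(A, ℂ*) is the dual group of A, with y acting on Â via α^y(a) = α(a^{y⁻¹}). -/
/-!
Pulling characters back along a homomorphism `f : K →* G` of abelian groups factors as restriction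
to `f.range` followed by pulling back along the surjection `K ↠ f.range`. For finite `G`, every
character of `f.range` extends to `G`, and pulling back along a surjection is injective, so the
image of the dual map is isomorphic to the dual of `f.range`, hence to `f.range`. Apply this to
`f = (a ↦ a⁻¹ * y⁻¹ a)`, whose dual map is `α ↦ α⁻¹ * α ∘ y⁻¹`, and note `[A, y⁻¹] = [A, y]`,
since `(y a)⁻¹ * a = (a⁻¹ * y a)⁻¹`.
-/

namespace MonoidHom

section Duality

variable {K G M : Type*} [Group K] [CommGroup G] [CommMonoid M]

theorem compHom'_injective {f : K →* G} (hf : Function.Surjective f) :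
    Function.Injective (compHom' f : (G →* Mˣ) →* K →* Mˣ) :=
  fun _ _ h => (cancel_right hf).mp h

theorem compHom'_eq_comp_domRestrictHom (f : K →* G) :
    (compHom' f : (G →* Mˣ) →* K →* Mˣ) =
      (compHom' f.rangeRestrict).comp (domRestrictHom f.range Mˣ) :=
  rfl

theorem nonempty_range_compHom'_mulEquiv_range [Finite G]
    [HasEnoughRootsOfUnity M (Monoid.exponent G)] (f : K →* G) :
    Nonempty ((compHom' f : (G →* Mˣ) →* K →* Mˣ).range ≃* f.range) := by
  have : HasEnoughRootsOfUnity M (Monoid.exponent f.range) :=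
    .of_dvd M (Monoid.exponent_submonoid_dvd f.range.toSubmonoid)
  have hrange : (compHom' f : (G →* Mˣ) →* K →* Mˣ).range =
      (compHom' f.rangeRestrict).range := by
    rw [compHom'_eq_comp_domRestrictHom, range_comp,
      range_eq_top_of_surjective _ (domRestrict_surjective M f.range), ← range_eq_map]
  rw [hrange]
  exact ⟨(ofInjective (compHom'_injective f.rangeRestrict_surjective)).symm.trans
    (CommGroup.monoidHom_mulEquiv_of_hasEnoughRootsOfUnity f.range M).some⟩

end Duality

theorem closure_range {G H : Type*} [Group G] [Group H] (f : G →* H) :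
    Subgroup.closure (Set.range f) = f.range := by
  rw [← coe_range, Subgroup.closure_eq]

section Commutator

variable {A : Type*} [CommGroup A]

/-- Its range is the subgroup `[A, σ]`. -/
def commutatorHom (σ : A →* A) : A →* A := (MonoidHom.id A)⁻¹ * σ

@[simp]
theorem commutatorHom_apply (σ : A →* A) (a : A) : commutatorHom σ a = a⁻¹ * σ a := rfl

theorem range_commutatorHom_inv_le (σ : MulAut A) :
    (commutatorHom (σ⁻¹ : MulAut A).toMonoidHom).range ≤ (commutatorHom σ.toMonoidHom).range := by
  rintro _ ⟨a, rfl⟩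
  have h : commutatorHom σ.toMonoidHom (σ⁻¹ a) =
      (commutatorHom (σ⁻¹ : MulAut A).toMonoidHom a)⁻¹ := by
    simp
  rw [← inv_mem_iff, ← h]
  exact ⟨_, rfl⟩

theorem range_commutatorHom_inv (σ : MulAut A) :
    (commutatorHom (σ⁻¹ : MulAut A).toMonoidHom).range = (commutatorHom σ.toMonoidHom).range :=
  le_antisymm (range_commutatorHom_inv_le σ) (by simpa using range_commutatorHom_inv_le σ⁻¹)

theorem compHom'_commutatorHom {N : Type*} [CommGroup N] (σ : A →* A) (α : A →* N) :
    compHom' (commutatorHom σ) α = α⁻¹ * α.comp σ := by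
  ext a
  simp

end Commutator

end MonoidHom

theorem dual_commutator_iso_general (A : Type*) [CommGroup A] [Fintype A]
    (y : MulAut A) :
    Nonempty
      ((Subgroup.closure (Set.range fun α : A →* ℂˣ =>
          α⁻¹ * α.comp (y⁻¹ : MulAut A).toMonoidHom)) ≃*
       (Subgroup.closure (Set.range fun a : A => a⁻¹ * y a))) := by
  have : NeZero (Monoid.exponent A) := ⟨Monoid.exponent_ne_zero_of_finite⟩
  have hdual : Subgroup.closure (Set.range fun α : A →* ℂˣ =>
      α⁻¹ * α.comp (y⁻¹ : MulAut A).toMonoidHom) =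
        (MonoidHom.compHom' (MonoidHom.commutatorHom (y⁻¹ : MulAut A).toMonoidHom)).range := by
    simp only [← MonoidHom.compHom'_commutatorHom]
    exact MonoidHom.closure_range (MonoidHom.compHom' (P := ℂˣ) _)
  have hA : Subgroup.closure (Set.range fun a : A => a⁻¹ * y a) =
      (MonoidHom.commutatorHom y.toMonoidHom).range :=
    MonoidHom.closure_range (MonoidHom.commutatorHom y.toMonoidHom)
  rw [hdual, hA, ← MonoidHom.range_commutatorHom_inv]
  exact MonoidHom.nonempty_range_compHom'_mulEquiv_range _

theorem dual_commutator_iso (A : Type*) [CommGroup A] [Fintype A]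
    (y : MulAut A) (hy : orderOf y = 2) :
    Nonempty
      ((Subgroup.closure (Set.range fun α : A →* ℂˣ =>
          α⁻¹ * α.comp (y⁻¹ : MulAut A).toMonoidHom)) ≃*
       (Subgroup.closure (Set.range fun a : A => a⁻¹ * y a))) :=
  dual_commutator_iso_general A y
end
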